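/- arXiv:2407.20379 — 2 statements merged into one kernel-verified Lean document; each statement's English description precedes it below -/
import Mathlib

section
/- Let N be a positive integer. The linear operators J₀ and J₁ on functions f : ℤ/Nℤ → ℂ, defined by (J₀ f)(x) = f(x+1) + 2cos(2πx/N) f(x) + f(x−1) and (J₁ f)(x) = cos(π(2x+1)/N) f(x+1) + cos(π(2x−1)/N) f(x−1), both commute with the discrete Fourier transform F_N. Consequently, for every integer a, the operator J = J₁ − cos(π(2a+1)/N) J₀ commutes with F_N. -/
open Complex

/-- The (non-normalized) discrete Fourier transform on `ZMod N`:
`(dft N f) k = ∑_{j=0}^{N-1} exp(-2πi j k / N) f(j)`. -/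
noncomputable def dft (N : ℕ) (f : ZMod N → ℂ) : ZMod N → ℂ := fun k =>
  ∑ j ∈ Finset.range N,
    Complex.exp (-(2 * Real.pi * Complex.I * (j : ℂ) * (k.val : ℂ)) / (N : ℂ)) * f (j : ZMod N)


/-- `(J₀ f)(x) = f(x+1) + 2cos(2πx/N) f(x) + f(x−1)`. -/
noncomputable def J0op (N : ℕ) (f : ZMod N → ℂ) : ZMod N → ℂ := fun x =>
  f (x + 1) + (2 * Real.cos (2 * Real.pi * (x.val : ℝ) / N) : ℝ) * f x + f (x - 1)

/-- `(J₁ f)(x) = cos(π(2x+1)/N) f(x+1) + cos(π(2x−1)/N) f(x−1)`. -/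
noncomputable def J1op (N : ℕ) (f : ZMod N → ℂ) : ZMod N → ℂ := fun x =>
  (Real.cos (Real.pi * (2 * (x.val : ℝ) + 1) / N) : ℝ) * f (x + 1) +
    (Real.cos (Real.pi * (2 * (x.val : ℝ) - 1) / N) : ℝ) * f (x - 1)

/-!
Write `e` for `ZMod.stdAddChar`, the character `x ↦ exp(2πix/N)` of `ZMod N`, and
`ω = exp(πi/N)` (`expPiIDiv N`), so that `ω² = e(1)`. Then `2cos(2πx/N) = e(x) + e(-x)` and
`cos(π(2x ± 1)/N) = (ω^{±1} e(x) + ω^{∓1} e(-x))/2`, which also takes care of the periodicity in `x`.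
Hence `J₀` and `J₁` are linear combinations of the time-frequency shifts `f ↦ (x ↦ e(bx) f(x + a))`,
and the Fourier transform conjugates the shift by `(a, b)` into `e(-ab)` times the shift by
`(-b, a)`. This permutes the four terms of `J₀`, and it permutes those of `J₁` because
`ω e(-1) = ω⁻¹`. The statement for `J` follows by linearity.
-/

open scoped ZMod
open Real

section

variable {N : ℕ} [NeZero N]

lemma ZMod.sum_range_natCast_eq_sum {M : Type*} [AddCommMonoid M] (g : ZMod N → M) :
    ∑ j ∈ Finset.range N, g (j : ZMod N) = ∑ x : ZMod N, g x :=
  Finset.sum_nbij' (fun j => (j : ZMod N)) ZMod.val (fun _ _ => Finset.mem_univ _)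
    (fun x _ => Finset.mem_range.mpr x.val_lt)
    (fun _ hj => ZMod.val_cast_of_lt (Finset.mem_range.mp hj))
    (fun x _ => ZMod.natCast_zmod_val x) (fun _ _ => rfl)

lemma dft_eq_zmodDFT (f : ZMod N → ℂ) : dft N f = 𝓕 f := by
  funext k
  rw [dft, ZMod.dft_apply, ← ZMod.sum_range_natCast_eq_sum]
  refine Finset.sum_congr rfl fun j _ => ?_
  have hcast : -((j : ZMod N) * k) = ((-(j * k.val : ℤ) : ℤ) : ZMod N) := by
    push_cast [ZMod.natCast_zmod_val]; rfl
  rw [smul_eq_mul, hcast, ZMod.stdAddChar_coe]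
  push_cast
  ring_nf

variable {E : Type*} [AddCommGroup E] [Module ℂ E]

noncomputable def timeFreqShift (a b : ZMod N) (f : ZMod N → E) : ZMod N → E :=
  fun x => ZMod.stdAddChar (b * x) • f (x + a)

lemma dft_timeFreqShift (a b : ZMod N) (f : ZMod N → E) :
    𝓕 (timeFreqShift a b f) = ZMod.stdAddChar (-(a * b)) • timeFreqShift (-b) a (𝓕 f) := by
  funext k
  simp only [timeFreqShift, ZMod.dft_apply, Pi.smul_apply, Finset.smul_sum, smul_smul,
    ← AddChar.map_add_eq_mul]
  refine Fintype.sum_equiv (Equiv.addRight a) _ _ fun x => ?_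
  simp only [Equiv.coe_addRight]
  congr 2
  ring

lemma ofReal_cos_pi_mul_two_mul_val_add_div (x : ZMod N) (s : ℝ) :
    ((Real.cos (π * (2 * x.val + s) / N) : ℝ) : ℂ) =
      (exp (π * I * s / N) * ZMod.stdAddChar x +
        exp (-(π * I * s / N)) * ZMod.stdAddChar (-x)) / 2 := by
  rw [AddChar.map_neg_eq_inv, ZMod.stdAddChar_apply, ZMod.toCircle_apply, ← Complex.exp_neg,
    ← Complex.exp_add, ← Complex.exp_add, Complex.ofReal_cos, Complex.cos]
  congr 3 <;> push_cast <;> ring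

lemma ofReal_two_mul_cos_two_pi_mul_val_div (x : ZMod N) :
    ((2 * Real.cos (2 * π * x.val / N) : ℝ) : ℂ) =
      ZMod.stdAddChar x + ZMod.stdAddChar (-x) := by
  rw [show 2 * π * x.val / N = π * (2 * x.val + 0) / N by ring, Complex.ofReal_mul,
    ofReal_cos_pi_mul_two_mul_val_add_div]
  simp [mul_div_cancel₀]

noncomputable def expPiIDiv (N : ℕ) : ℂ := exp (π * I / N)

lemma stdAddChar_one_eq_expPiIDiv_sq : ZMod.stdAddChar (1 : ZMod N) = expPiIDiv N ^ 2 := by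
  rw [← Int.cast_one, ZMod.stdAddChar_coe, expPiIDiv, sq, ← Complex.exp_add]
  congr 1
  push_cast
  ring

lemma J0op_eq_sum_timeFreqShift (f : ZMod N → ℂ) :
    J0op N f = timeFreqShift 1 0 f + timeFreqShift 0 1 f + timeFreqShift 0 (-1) f +
      timeFreqShift (-1) 0 f := by
  funext x
  simp only [J0op, timeFreqShift, Pi.add_apply, ofReal_two_mul_cos_two_pi_mul_val_div, zero_mul,
    AddChar.map_zero_eq_one, add_zero, one_mul, neg_one_mul, smul_eq_mul, sub_eq_add_neg]
  ring

lemma J1op_eq_sum_timeFreqShift (f : ZMod N → ℂ) :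
    J1op N f =
      (expPiIDiv N / 2) • timeFreqShift 1 1 f + ((expPiIDiv N)⁻¹ / 2) • timeFreqShift 1 (-1) f +
      ((expPiIDiv N)⁻¹ / 2) • timeFreqShift (-1) 1 f +
      (expPiIDiv N / 2) • timeFreqShift (-1) (-1) f := by
  funext x
  simp only [J1op, timeFreqShift, Pi.add_apply, Pi.smul_apply, sub_eq_add_neg,
    ofReal_cos_pi_mul_two_mul_val_add_div, one_mul, neg_one_mul, smul_eq_mul, Complex.ofReal_neg,
    Complex.ofReal_one, mul_one, mul_neg, neg_div, neg_neg, Complex.exp_neg, expPiIDiv]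
  ring

theorem dft_J0op (f : ZMod N → ℂ) : 𝓕 (J0op N f) = J0op N (𝓕 f) := by
  simp only [J0op_eq_sum_timeFreqShift, map_add, dft_timeFreqShift, mul_zero, zero_mul, neg_zero,
    neg_neg, AddChar.map_zero_eq_one, one_smul]
  abel

theorem dft_J1op (f : ZMod N → ℂ) : 𝓕 (J1op N f) = J1op N (𝓕 f) := by
  have h₁ : (expPiIDiv N)⁻¹ / 2 * ZMod.stdAddChar (1 : ZMod N) = expPiIDiv N / 2 := by
    rw [stdAddChar_one_eq_expPiIDiv_sq]; field_simp
  have h₂ : expPiIDiv N / 2 * ZMod.stdAddChar (-1 : ZMod N) = (expPiIDiv N)⁻¹ / 2 := by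
    rw [AddChar.map_neg_eq_inv, stdAddChar_one_eq_expPiIDiv_sq]; field_simp
  simp only [J1op_eq_sum_timeFreqShift, map_add, map_smul, dft_timeFreqShift, smul_smul, mul_one,
    mul_neg, neg_neg, h₁, h₂]
  abel

end

theorem statement5 (N : ℕ) (hN : 0 < N) :
    (∀ f : ZMod N → ℂ, dft N (J0op N f) = J0op N (dft N f)) ∧
    (∀ f : ZMod N → ℂ, dft N (J1op N f) = J1op N (dft N f)) ∧
    (∀ a : ℤ, ∀ f : ZMod N → ℂ,
      dft N (fun x => J1op N f x - (Real.cos (Real.pi * (2 * (a : ℝ) + 1) / N) : ℂ) * J0op N f x)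
        = fun x => J1op N (dft N f) x -
            (Real.cos (Real.pi * (2 * (a : ℝ) + 1) / N) : ℂ) * J0op N (dft N f) x) := by
  have : NeZero N := ⟨hN.ne'⟩
  refine ⟨fun f => by simp only [dft_eq_zmodDFT, dft_J0op],
    fun f => by simp only [dft_eq_zmodDFT, dft_J1op], fun a f => ?_⟩
  have hlin : ∀ c : ℂ,
      dft N (J1op N f - c • J0op N f) = J1op N (dft N f) - c • J0op N (dft N f) := by
    simp only [dft_eq_zmodDFT, map_sub, map_smul, dft_J0op, dft_J1op, implies_true]
  exact hlin _
end

section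
/- Let N be a positive integer and a an integer with 0 ≤ a ≤ (N−1)/2. Then J maps C_a into C_a, the restriction of J to C_a has simple spectrum (its eigenvalues are distinct, with dim C_a of them counted with multiplicity), and every eigenvector of J lying in C_a is an eigenvector of F_N. -/
open Complex

/-- The discrete interval `[-a, a]`, viewed as a subset of `ZMod N`. -/
def dInterval (N : ℕ) (a : ℤ) : Set (ZMod N) := {x | ∃ j : ℤ, |j| ≤ a ∧ (j : ZMod N) = x}

/-- The discrete Fourier transform as a linear map. -/
noncomputable def dftL (N : ℕ) : (ZMod N → ℂ) →ₗ[ℂ] (ZMod N → ℂ) where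
  toFun f := dft N f
  map_add' f g := by
    funext k
    simp only [dft, Pi.add_apply, mul_add]
    rw [Finset.sum_add_distrib]
  map_smul' c f := by
    funext k
    simp only [dft, Pi.smul_apply, smul_eq_mul, RingHom.id_apply]
    rw [Finset.mul_sum]
    exact Finset.sum_congr rfl fun j _ => by ring

/-- The subspace `L²(S)` of functions on `ZMod N` vanishing outside `S`. -/
noncomputable def supportedIn (N : ℕ) (S : Set (ZMod N)) : Submodule ℂ (ZMod N → ℂ) where
  carrier := {f | ∀ x ∉ S, f x = 0}
  add_mem' := by
    intro f g hf hg x hx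
    simp [hf x hx, hg x hx]
  zero_mem' := by
    intro x _
    rfl
  smul_mem' := by
    intro c f hf x hx
    simp [hf x hx]

/-- The space `C_a` of functions supported in `[-a,a]` whose Fourier transform is
also supported in `[-a,a]`. -/
noncomputable def Ca (N : ℕ) (a : ℤ) : Submodule ℂ (ZMod N → ℂ) :=
  supportedIn N (dInterval N a) ⊓ Submodule.comap (dftL N) (supportedIn N (dInterval N a))

/-- `A(x) = cos(π(2x+1)/N) − cos(π(2a+1)/N)`. -/
noncomputable def acoef (N : ℕ) (a : ℤ) (x : ZMod N) : ℝ :=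
  Real.cos (Real.pi * (2 * (x.val : ℝ) + 1) / N) - Real.cos (Real.pi * (2 * (a : ℝ) + 1) / N)

/-- `B(x) = −2 cos(π(2a+1)/N) cos(2πx/N)`. -/
noncomputable def bcoef (N : ℕ) (a : ℤ) (x : ZMod N) : ℝ :=
  -2 * Real.cos (Real.pi * (2 * (a : ℝ) + 1) / N) * Real.cos (2 * Real.pi * (x.val : ℝ) / N)

/-- The operator `J = J₁ − cos(π(2a+1)/N) J₀`:
`(J f)(x) = A(x) f(x+1) + B(x) f(x) + A(x−1) f(x−1)`. -/
noncomputable def Jop (N : ℕ) (a : ℤ) (f : ZMod N → ℂ) : ZMod N → ℂ := fun x =>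
  (acoef N a x : ℂ) * f (x + 1) + (bcoef N a x : ℂ) * f x + (acoef N a (x - 1) : ℂ) * f (x - 1)

open scoped Real

/-!
`J` has real coefficients and is symmetric, and it commutes with the Fourier transform because
it acts in the same way on both variables of the Fourier kernel `(x, k) ↦ exp(-2πi x k / N)`.
Since `A` vanishes at `a` and at `-a-1`, `J` preserves the functions supported in `[-a, a]`,
hence also `C_a`. On these functions `J` is a tridiagonal matrix whose off-diagonal entries
`A(-a), …, A(a-1)` are positive, so an eigenvector is determined by its value at `-a` and every
eigenspace of `J` in `C_a` is at most one-dimensional. The spectral theorem for the symmetric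
restriction of `J` to `C_a` then gives `dim C_a` distinct eigenvalues. Finally, `F_N` maps an
eigenvector `f ∈ C_a` of `J` to an eigenvector in `C_a` with the same eigenvalue, which must be a
multiple of `f`.
-/

section Fourier

variable {N : ℕ} [NeZero N]

theorem dft_eq_zmodDft (f : ZMod N → ℂ) : dft N f = ZMod.dft f := by
  funext k
  rw [dft, ZMod.dft_apply]
  refine Finset.sum_nbij' (fun j => (j : ZMod N)) ZMod.val (fun _ _ => Finset.mem_univ _)
    (fun x _ => Finset.mem_range.2 x.val_lt)
    (fun j hj => ZMod.val_cast_of_lt (Finset.mem_range.1 hj)) (fun x _ => ZMod.natCast_zmod_val x)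
    fun j _ => ?_
  have hcast : -((j : ZMod N) * k) = (Int.cast (-(j * k.val : ℤ)) : ZMod N) := by
    simp
  rw [hcast, ZMod.stdAddChar_coe, smul_eq_mul]
  congr 2
  push_cast
  ring

theorem ofReal_cos_eq (θ : ℝ) : (Real.cos θ : ℂ) = (exp (θ * I) + (exp (θ * I))⁻¹) / 2 := by
  rw [ofReal_cos, ← exp_neg, ← neg_mul, ← two_cos]
  ring

theorem cexp_mul_stdAddChar_intCast (j : ℤ) :
    exp (π * I / N) * ZMod.stdAddChar (j : ZMod N) = exp (↑(π * (2 * j + 1) / N) * I) := by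
  rw [ZMod.stdAddChar_coe, ← exp_add]
  congr 1
  push_cast
  ring

variable {a : ℤ}

-- `A` samples a cosine at the half-integers `x + 1/2`, hence the square root `exp (πi/N)` of
-- `ZMod.stdAddChar 1`.
theorem acoef_eq (x : ZMod N) :
    (acoef N a x : ℂ) = (exp (π * I / N) * ZMod.stdAddChar x
      + (exp (π * I / N) * ZMod.stdAddChar x)⁻¹) / 2 - Real.cos (π * (2 * a + 1) / N) := by
  rw [← ZMod.natCast_zmod_val x, ← Int.cast_natCast, cexp_mul_stdAddChar_intCast,
    ← ofReal_cos_eq, acoef, Int.cast_natCast, ZMod.natCast_zmod_val]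
  push_cast
  rfl

theorem bcoef_eq (x : ZMod N) :
    (bcoef N a x : ℂ) = -Real.cos (π * (2 * a + 1) / N)
      * (ZMod.stdAddChar x + (ZMod.stdAddChar x)⁻¹) := by
  have hx : ZMod.stdAddChar x = exp (↑(2 * π * x.val / N) * I) := by
    rw [ZMod.stdAddChar_apply, ZMod.toCircle_apply]
    push_cast
    ring_nf
  rw [bcoef, hx, ofReal_mul, ofReal_mul, ofReal_cos_eq (2 * π * x.val / N)]
  push_cast
  ring

theorem acoef_intCast (j : ℤ) :
    acoef N a j = Real.cos (π * (2 * j + 1) / N) - Real.cos (π * (2 * a + 1) / N) := by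
  apply ofReal_injective
  rw [acoef_eq, cexp_mul_stdAddChar_intCast, ← ofReal_cos_eq]
  push_cast
  rfl

theorem sum_mul_Jop_comm (f g : ZMod N → ℂ) :
    ∑ x, g x * Jop N a f x = ∑ x, Jop N a g x * f x := by
  have hup : ∑ x, g x * (acoef N a x * f (x + 1)) = ∑ x, g (x - 1) * acoef N a (x - 1) * f x :=
    Fintype.sum_equiv (Equiv.addRight 1) _ _ fun x => by simp [mul_assoc]
  have hdown : ∑ x, g x * (acoef N a (x - 1) * f (x - 1)) = ∑ x, g (x + 1) * acoef N a x * f x :=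
    Fintype.sum_equiv (Equiv.subRight 1) _ _ fun x => by simp [mul_assoc]
  calc ∑ x, g x * Jop N a f x
      = ∑ x, g x * (acoef N a x * f (x + 1)) + ∑ x, g x * (bcoef N a x * f x)
          + ∑ x, g x * (acoef N a (x - 1) * f (x - 1)) := by
        simp only [Jop, mul_add, Finset.sum_add_distrib]
    _ = ∑ x, Jop N a g x * f x := by
        rw [hup, hdown, ← Finset.sum_add_distrib, ← Finset.sum_add_distrib]
        exact Finset.sum_congr rfl fun x _ => by simp only [Jop]; ring

theorem cexp_sq_eq_stdAddChar_one : exp (π * I / N) ^ 2 = ZMod.stdAddChar (1 : ZMod N) := by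
  rw [← Int.cast_one, ZMod.stdAddChar_coe, ← exp_nat_mul]
  push_cast
  ring_nf

theorem Jop_stdAddChar_comm (y k : ZMod N) :
    Jop N a (fun z => ZMod.stdAddChar (-(z * k))) y
      = Jop N a (fun z => ZMod.stdAddChar (-(y * z))) k := by
  have hy : ZMod.stdAddChar y ≠ 0 := Circle.coe_ne_zero _
  have hk : ZMod.stdAddChar k ≠ 0 := Circle.coe_ne_zero _
  simp only [Jop, acoef_eq, bcoef_eq, neg_mul, mul_neg, add_mul, mul_add, one_mul, mul_one,
    neg_add, sub_eq_add_neg, AddChar.map_add_eq_mul,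
    AddChar.map_neg_eq_inv, ← cexp_sq_eq_stdAddChar_one]
  generalize ZMod.stdAddChar y = u at hy ⊢
  generalize ZMod.stdAddChar k = v at hk ⊢
  field_simp
  ring

theorem zmodDft_Jop_comm (f : ZMod N → ℂ) : ZMod.dft (Jop N a f) = Jop N a (ZMod.dft f) := by
  funext k
  calc ZMod.dft (Jop N a f) k
      = ∑ x, Jop N a (fun z => ZMod.stdAddChar (-(z * k))) x * f x := by
        rw [ZMod.dft_apply, ← sum_mul_Jop_comm]
        rfl
    _ = ∑ x, Jop N a (fun z => ZMod.stdAddChar (-(x * z))) k * f x := by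
        simp only [Jop_stdAddChar_comm]
    _ = Jop N a (ZMod.dft f) k := by
        simp only [Jop, ZMod.dft_apply, smul_eq_mul, Finset.mul_sum, ← Finset.sum_add_distrib]
        exact Finset.sum_congr rfl fun x _ => by ring

theorem dft_Jop_comm (f : ZMod N → ℂ) : dft N (Jop N a f) = Jop N a (dft N f) := by
  rw [dft_eq_zmodDft, dft_eq_zmodDft, zmodDft_Jop_comm]

end Fourier

section Support

variable {N : ℕ} {a : ℤ}

theorem eq_neg_sub_one_of_notMem_of_add_one_mem {x : ZMod N} (hx : x ∉ dInterval N a)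
    (hx1 : x + 1 ∈ dInterval N a) : x = (-a - 1 : ℤ) := by
  obtain ⟨j, hj, hjx⟩ := hx1
  rw [abs_le] at hj
  obtain rfl | hja := eq_or_lt_of_le hj.1
  · push_cast at hjx ⊢
    linear_combination -hjx
  · exact absurd ⟨j - 1, abs_le.2 ⟨by omega, by omega⟩, by push_cast; rw [hjx]; ring⟩ hx

theorem eq_of_mem_of_add_one_notMem {x : ZMod N} (hx : x ∈ dInterval N a)
    (hx1 : x + 1 ∉ dInterval N a) : x = (a : ℤ) := by
  obtain ⟨j, hj, rfl⟩ := hx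
  rw [abs_le] at hj
  obtain rfl | hja := eq_or_lt_of_le hj.2
  · rfl
  · exact absurd ⟨j + 1, abs_le.2 ⟨by omega, by omega⟩, by push_cast; rfl⟩ hx1

variable [NeZero N]

theorem acoef_intCast_self : acoef N a (a : ℤ) = 0 := by
  rw [acoef_intCast, sub_self]

theorem acoef_intCast_neg_sub_one : acoef N a (-a - 1 : ℤ) = 0 := by
  rw [acoef_intCast, ← Real.cos_neg (π * (2 * ((-a - 1 : ℤ) : ℝ) + 1) / N)]
  push_cast
  ring_nf

theorem acoef_intCast_pos (ha : 2 * a + 1 ≤ (N : ℤ)) {j : ℤ} (hj : -a ≤ j) (hja : j < a) :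
    0 < acoef N a j := by
  have hN : (0 : ℝ) < N := by exact_mod_cast NeZero.pos N
  have hj' : (-a : ℝ) ≤ j := by exact_mod_cast hj
  have hja' : (j : ℝ) < a := by exact_mod_cast hja
  have hlt : |(2 * j + 1 : ℝ)| < 2 * a + 1 := abs_lt.2 ⟨by linarith, by linarith⟩
  have hle : (2 * a + 1 : ℝ) ≤ N := by exact_mod_cast ha
  have hcos : Real.cos (π * (2 * j + 1) / N) = Real.cos (π * |(2 * j + 1 : ℝ)| / N) := by
    rw [← Real.cos_abs, abs_div, abs_mul, abs_of_pos Real.pi_pos, abs_of_pos hN]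
  rw [acoef_intCast, sub_pos, hcos]
  apply Real.cos_lt_cos_of_nonneg_of_le_pi (by positivity)
  · rw [div_le_iff₀ hN]; nlinarith [Real.pi_pos]
  · gcongr

theorem Jop_mem_supportedIn {f : ZMod N → ℂ} (hf : f ∈ supportedIn N (dInterval N a)) :
    Jop N a f ∈ supportedIn N (dInterval N a) := by
  intro x hx
  have hup : (acoef N a x : ℂ) * f (x + 1) = 0 := by
    by_cases hx1 : x + 1 ∈ dInterval N a
    · rw [eq_neg_sub_one_of_notMem_of_add_one_mem hx hx1, acoef_intCast_neg_sub_one,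
        ofReal_zero, zero_mul]
    · rw [hf _ hx1, mul_zero]
  have hdown : (acoef N a (x - 1) : ℂ) * f (x - 1) = 0 := by
    by_cases hx1 : x - 1 ∈ dInterval N a
    · rw [eq_of_mem_of_add_one_notMem hx1 (by rwa [sub_add_cancel]), acoef_intCast_self,
        ofReal_zero, zero_mul]
    · rw [hf _ hx1, mul_zero]
  rw [Jop, hup, hdown, hf x hx, mul_zero, add_zero, add_zero]

theorem Jop_mem_Ca {f : ZMod N → ℂ} (hf : f ∈ Ca N a) : Jop N a f ∈ Ca N a :=
  ⟨Jop_mem_supportedIn hf.1, by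
    change dft N (Jop N a f) ∈ supportedIn N (dInterval N a)
    exact dft_Jop_comm f ▸ Jop_mem_supportedIn hf.2⟩

end Support

noncomputable def JopL (N : ℕ) (a : ℤ) : Module.End ℂ (ZMod N → ℂ) where
  toFun := Jop N a
  map_add' f g := by funext x; simp only [Jop, Pi.add_apply]; ring
  map_smul' s f := by funext x; simp only [Jop, Pi.smul_apply, smul_eq_mul, RingHom.id_apply]; ring

section Eigenvectors

variable {N : ℕ} [NeZero N] {a : ℤ} {c : ℂ} {f g : ZMod N → ℂ}

theorem eq_zero_of_Jop_eq_smul (ha : 2 * a + 1 ≤ (N : ℤ))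
    (hf : f ∈ supportedIn N (dInterval N a)) (hJ : Jop N a f = c • f) (h0 : f (-a : ℤ) = 0) :
    f = 0 := by
  have hvanish : ∀ j : ℤ, -a ≤ j → j ≤ a →
      f j = 0 ∧ (acoef N a (j - 1 : ℤ) : ℂ) * f (j - 1 : ℤ) = 0 := by
    intro j hj
    induction j, hj using Int.leInduction with
    | base =>
      intro _
      rw [acoef_intCast_neg_sub_one, ofReal_zero, zero_mul]
      exact ⟨h0, rfl⟩
    | succ j hj ih =>
      intro hja
      obtain ⟨hfj, hprev⟩ := ih (by omega)
      have hA : (acoef N a j : ℂ) ≠ 0 := ofReal_ne_zero.2 (acoef_intCast_pos ha hj (by omega)).ne'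
      have hrow := congrFun hJ j
      simp only [Jop, Pi.smul_apply, smul_eq_mul, hfj, mul_zero, add_zero] at hrow
      push_cast at hprev ⊢
      rw [add_sub_cancel_right, hfj, mul_zero]
      exact ⟨(mul_eq_zero.1 (by linear_combination hrow - hprev)).resolve_left hA, rfl⟩
  funext x
  by_cases hx : x ∈ dInterval N a
  · obtain ⟨j, hj, rfl⟩ := hx
    exact (hvanish j (abs_le.1 hj).1 (abs_le.1 hj).2).1
  · exact hf x hx

theorem exists_eq_smul_of_Jop_eq_smul (ha : 2 * a + 1 ≤ (N : ℤ))
    (hf : f ∈ supportedIn N (dInterval N a)) (hg : g ∈ supportedIn N (dInterval N a))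
    (hJf : Jop N a f = c • f) (hJg : Jop N a g = c • g) (hf0 : f ≠ 0) :
    ∃ s : ℂ, g = s • f := by
  have hfa : f (-a : ℤ) ≠ 0 := fun h => hf0 (eq_zero_of_Jop_eq_smul ha hf hJf h)
  refine ⟨g (-a : ℤ) / f (-a : ℤ), sub_eq_zero.1 (eq_zero_of_Jop_eq_smul (c := c) ha
    (sub_mem hg (Submodule.smul_mem _ _ hf)) ?_ ?_)⟩
  · change JopL N a (g - _ • f) = _
    rw [map_sub, map_smul]
    change Jop N a g - _ • Jop N a f = _
    rw [hJf, hJg, smul_sub, smul_comm]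
  · change g _ - g _ / f _ * f _ = 0
    rw [div_mul_cancel₀ _ hfa, sub_self]

end Eigenvectors

theorem LinearMap.IsSymmetric.exists_injective_eigenvalues {𝕜 E : Type*} [RCLike 𝕜]
    [NormedAddCommGroup E] [InnerProductSpace 𝕜 E] {T : E →ₗ[𝕜] E} (hT : T.IsSymmetric)
    {p : Submodule 𝕜 E} [FiniteDimensional 𝕜 p] (hp : ∀ v ∈ p, T v ∈ p) {n : ℕ}
    (hn : Module.finrank 𝕜 p = n)
    (hsimple : ∀ (c : 𝕜) (v w : E), v ∈ p → w ∈ p → v ≠ 0 → T v = c • v → T w = c • w →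
      ∃ s : 𝕜, w = s • v) :
    ∃ μ : Fin n → ℝ, Function.Injective μ ∧ ∀ i, ∃ v ∈ p, v ≠ 0 ∧ T v = (μ i : 𝕜) • v := by
  have hS := hT.restrict_invariant hp
  set b := hS.eigenvectorBasis hn
  have hb := b.orthonormal
  have hb0 : ∀ i, (b i : E) ≠ 0 := fun i => by simpa using hb.ne_zero i
  have heig : ∀ i, T (b i) = (hS.eigenvalues hn i : 𝕜) • (b i : E) := fun i =>
    congrArg Subtype.val (hS.apply_eigenvectorBasis hn i)
  refine ⟨hS.eigenvalues hn, fun i j hij => ?_, fun i => ⟨b i, (b i).2, hb0 i, heig i⟩⟩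
  by_contra hne
  obtain ⟨s, hs⟩ := hsimple _ _ _ (b i).2 (b j).2 (hb0 i) (heig i) (hij ▸ heig j)
  have horth : inner 𝕜 (b i : E) (b j : E) = 0 := by rw [← Submodule.coe_inner]; exact hb.2 hne
  rw [hs, inner_smul_right, inner_self_eq_norm_sq_to_K, ← Submodule.coe_norm, hb.1 i] at horth
  exact hb0 j (by rw [hs, show s = 0 by simpa using horth, zero_smul])

noncomputable def JopEuclidean (N : ℕ) (a : ℤ) : Module.End ℂ (EuclideanSpace ℂ (ZMod N)) :=
  (WithLp.linearEquiv 2 ℂ (ZMod N → ℂ)).symm.conj (JopL N a)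

section Spectrum

variable {N : ℕ} {a : ℤ}

theorem ofLp_JopEuclidean (v : EuclideanSpace ℂ (ZMod N)) :
    (JopEuclidean N a v).ofLp = Jop N a v.ofLp :=
  rfl

theorem conj_Jop (f : ZMod N → ℂ) (x : ZMod N) :
    starRingEnd ℂ (Jop N a f x) = Jop N a (fun y => starRingEnd ℂ (f y)) x := by
  simp only [Jop, map_add, map_mul, conj_ofReal]

variable [NeZero N]

theorem isSymmetric_JopEuclidean : (JopEuclidean N a).IsSymmetric := fun f g => by
  simp only [PiLp.inner_apply, RCLike.inner_apply', ofLp_JopEuclidean, conj_Jop]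
  exact (sum_mul_Jop_comm _ _).symm

theorem exists_injective_eigenvalues_Jop (ha : 2 * a + 1 ≤ (N : ℤ)) :
    ∃ μ : Fin (Module.finrank ℂ (Ca N a)) → ℝ, Function.Injective μ ∧
      ∀ i, ∃ f ∈ Ca N a, f ≠ 0 ∧ Jop N a f = (μ i : ℂ) • f := by
  let e := WithLp.linearEquiv 2 ℂ (ZMod N → ℂ)
  have heig {c : ℂ} {v : EuclideanSpace ℂ (ZMod N)} (h : JopEuclidean N a v = c • v) :
      Jop N a (e v) = c • e v := by
    rw [← map_smul, ← h, ← ofLp_JopEuclidean]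
    rfl
  obtain ⟨μ, hμ, hv⟩ := isSymmetric_JopEuclidean.exists_injective_eigenvalues
    (p := (Ca N a).comap e.toLinearMap) (fun v hv => Jop_mem_Ca hv)
    (e.ofSubmodule' (Ca N a)).finrank_eq
    fun c v w hv hw hv0 hJv hJw => by
      obtain ⟨s, hs⟩ := exists_eq_smul_of_Jop_eq_smul ha hv.1 hw.1 (heig hJv) (heig hJw)
        (e.map_ne_zero_iff.2 hv0)
      exact ⟨s, e.injective (by rw [map_smul]; exact hs)⟩
  refine ⟨μ, hμ, fun i => ?_⟩
  obtain ⟨v, hvCa, hv0, hJv⟩ := hv i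
  exact ⟨e v, hvCa, e.map_ne_zero_iff.2 hv0, heig hJv⟩

end Spectrum

theorem statement6_general (N : ℕ) (hN : 0 < N) (a : ℤ) (h1 : 2 * a + 1 ≤ (N : ℤ)) :
    (∀ f ∈ Ca N a, Jop N a f ∈ Ca N a) ∧
    (∃ μ : Fin (Module.finrank ℂ ↥(Ca N a)) → ℝ, Function.Injective μ ∧
      ∀ i, ∃ f ∈ Ca N a, f ≠ 0 ∧ Jop N a f = (μ i : ℂ) • f) ∧
    (∀ f ∈ Ca N a, f ≠ 0 → (∃ c : ℂ, Jop N a f = c • f) →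
      ∃ d : ℂ, dft N f = d • f) := by
  have : NeZero N := ⟨hN.ne'⟩
  refine ⟨fun f => Jop_mem_Ca, exists_injective_eigenvalues_Jop h1, ?_⟩
  rintro f ⟨hf, hFf⟩ hf0 ⟨c, hJf⟩
  have hJFf : Jop N a (dft N f) = c • dft N f := by
    rw [← dft_Jop_comm, hJf]
    exact (dftL N).map_smul c f
  exact exists_eq_smul_of_Jop_eq_smul h1 hf hFf hJf hJFf hf0

theorem statement6 (N : ℕ) (hN : 0 < N) (a : ℤ) (h0 : 0 ≤ a) (h1 : 2 * a + 1 ≤ (N : ℤ)) :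
    (∀ f ∈ Ca N a, Jop N a f ∈ Ca N a) ∧
    (∃ μ : Fin (Module.finrank ℂ ↥(Ca N a)) → ℝ, Function.Injective μ ∧
      ∀ i, ∃ f ∈ Ca N a, f ≠ 0 ∧ Jop N a f = (μ i : ℂ) • f) ∧
    (∀ f ∈ Ca N a, f ≠ 0 → (∃ c : ℂ, Jop N a f = c • f) →
      ∃ d : ℂ, dft N f = d • f) :=
  statement6_general N hN a h1
end
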